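/- Let x = (x_n)_{n≥2} and y = (y_n)_{n≥2} be sequences with x_n, y_n ∈ {1,…,n}. If there exists a bijective isometry φ : (M_x, d_x) → (M_y, d_y) with φ(P⁺_{x,2}) = P⁺_{y,2}, then x = y, i.e., x_n = y_n for all n ≥ 2. -/

import Mathlib

noncomputable section

/-- The tree distance on `ℝ²`. -/
def treeDist (p q : ℝ × ℝ) : ℝ :=
  if p.1 = q.1 then |p.2 - q.2| else |p.2| + |p.1 - q.1| + |q.2|

/-- `∑_{i=2}^n e^{i²}`. -/
def expSum (n : ℕ) : ℝ := ∑ i ∈ Finset.Icc 2 n, Real.exp ((i : ℝ) ^ 2)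

/-- `P⁺_{x,n} = (∑_{i=2}^n e^{i²}, e^{x_n})`. -/
def Pp (x : ℕ → ℕ) (n : ℕ) : ℝ × ℝ := (expSum n, Real.exp (x n))

/-- `P⁻_{x,n} = (∑_{i=2}^n e^{i²}, −e^{x_n})`. -/
def Pm (x : ℕ → ℕ) (n : ℕ) : ℝ × ℝ := (expSum n, -Real.exp (x n))

/-- `M_{x,n} = {P⁺_{x,n}, P⁻_{x,n}}`. -/
def Mpart (x : ℕ → ℕ) (n : ℕ) : Set (ℝ × ℝ) := {Pp x n, Pm x n}

/-- `M_x = ⋃_{n≥2} M_{x,n}`. -/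
def Mset (x : ℕ → ℕ) : Set (ℝ × ℝ) := ⋃ n ∈ {m : ℕ | 2 ≤ m}, Mpart x n

/-- `x = (x_n)_{n≥2}` is a sequence with `x_n ∈ {1,…,n}`. -/
def SeqOK (x : ℕ → ℕ) : Prop := ∀ n, 2 ≤ n → 1 ≤ x n ∧ x n ≤ n

/-- `A` is a `C`-net in `(M_x, d_x)`: `A ⊆ M_x` and every point of `M_x` is at
distance (infimum) at most `C` from `A`. -/
def IsNet (x : ℕ → ℕ) (C : ℝ) (A : Set (ℝ × ℝ)) : Prop :=
  A ⊆ Mset x ∧ ∀ p ∈ Mset x, ∀ ε > 0, ∃ a ∈ A, treeDist p a ≤ C + ε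

/-- `φ : A → B` is a `λ`-bi-Lipschitz bijection. -/
def IsBiLipOn (lam : ℝ) (A B : Set (ℝ × ℝ)) (φ : ℝ × ℝ → ℝ × ℝ) : Prop :=
  Set.BijOn φ A B ∧ ∀ p ∈ A, ∀ q ∈ A,
    lam⁻¹ * treeDist p q ≤ treeDist (φ p) (φ q) ∧
    treeDist (φ p) (φ q) ≤ lam * treeDist p q

/-!
The distance from `P⁺_{2}` tells the level `n` of a point of `M_x`: it lies in
`[s_n - s_2, s_{n+1} - s_2)` with `s_n = ∑_{i=2}^n e^{i²}`, because the vertical excursions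
`e^{x_n} + e^{x_2} ≤ 2eⁿ` are smaller than the gap `e^{(n+1)²}` between consecutive levels.
Hence a pointed isometry maps `M_{x,n}` into `M_{y,n}`, and the distance `2e^{x_n}` between the
two points of `M_{x,n}` must equal the distance `2e^{y_n}` between those of `M_{y,n}`.
-/

open Real

lemma treeDist_comm (p q : ℝ × ℝ) : treeDist p q = treeDist q p := by
  unfold treeDist
  split_ifs with h h' h'
  · exact abs_sub_comm _ _
  · exact absurd h.symm h'
  · exact absurd h'.symm h
  · rw [abs_sub_comm p.1]; ring

lemma abs_fst_sub_le_treeDist (p q : ℝ × ℝ) : |p.1 - q.1| ≤ treeDist p q := by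
  unfold treeDist
  split_ifs with h
  · simp [h]
  · linarith [abs_nonneg p.2, abs_nonneg q.2]

lemma treeDist_le (p q : ℝ × ℝ) : treeDist p q ≤ |p.2| + |p.1 - q.1| + |q.2| := by
  unfold treeDist
  split_ifs
  · linarith [abs_sub p.2 q.2, abs_nonneg (p.1 - q.1)]
  · exact le_rfl

lemma expSum_mono : Monotone expSum := fun _ _ h =>
  Finset.sum_le_sum_of_subset_of_nonneg (Finset.Icc_subset_Icc_right h)
    fun _ _ _ => (exp_pos _).le

lemma expSum_succ {n : ℕ} (hn : 1 ≤ n) : expSum (n + 1) = expSum n + exp (((n : ℝ) + 1) ^ 2) := by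
  rw [expSum, Finset.sum_Icc_succ_top (by omega)]
  push_cast
  rfl

lemma two_mul_exp_lt_exp_succ_sq (n : ℕ) : 2 * exp n < exp (((n : ℝ) + 1) ^ 2) := calc
  2 * exp n < exp 1 * exp n := by gcongr; linarith [exp_one_gt_d9]
  _ = exp (n + 1) := by rw [← exp_add, add_comm]
  _ ≤ exp (((n : ℝ) + 1) ^ 2) := by gcongr; nlinarith [Nat.cast_nonneg (α := ℝ) n]

section Levels

variable {x : ℕ → ℕ} {n : ℕ} {p : ℝ × ℝ}

lemma Pp_mem_Mpart (x : ℕ → ℕ) (n : ℕ) : Pp x n ∈ Mpart x n := Or.inl rfl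

lemma Pm_mem_Mpart (x : ℕ → ℕ) (n : ℕ) : Pm x n ∈ Mpart x n := Or.inr rfl

lemma mem_Mset : p ∈ Mset x ↔ ∃ n, 2 ≤ n ∧ p ∈ Mpart x n := by
  simp [Mset]

lemma Mpart_subset_Mset (hn : 2 ≤ n) : Mpart x n ⊆ Mset x := fun _ hp => mem_Mset.2 ⟨n, hn, hp⟩

lemma Pp_ne_Pm (x : ℕ → ℕ) (n : ℕ) : Pp x n ≠ Pm x n := fun h => by
  have := congrArg Prod.snd h
  simp only [Pp, Pm] at this
  linarith [exp_pos (x n : ℝ)]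

lemma fst_of_mem_Mpart (hp : p ∈ Mpart x n) : p.1 = expSum n := by
  rcases hp with rfl | rfl <;> rfl

lemma abs_snd_of_mem_Mpart (hp : p ∈ Mpart x n) : |p.2| = exp (x n) := by
  rcases hp with rfl | rfl <;> simp [Pp, Pm, abs_of_pos (exp_pos _)]

lemma treeDist_Pp_Pm (x : ℕ → ℕ) (n : ℕ) : treeDist (Pp x n) (Pm x n) = 2 * exp (x n) := by
  simp only [treeDist, Pp, Pm, if_true, sub_neg_eq_add, ← two_mul]
  exact abs_of_pos (by positivity)

lemma treeDist_eq_of_mem_Mpart_of_ne {p q : ℝ × ℝ} (hp : p ∈ Mpart x n) (hq : q ∈ Mpart x n)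
    (hpq : p ≠ q) : treeDist p q = 2 * exp (x n) := by
  rcases hp with rfl | rfl <;> rcases hq with rfl | rfl <;> try exact absurd rfl hpq
  · exact treeDist_Pp_Pm x n
  · rw [treeDist_comm, treeDist_Pp_Pm]

lemma treeDist_Pp_two_mem_Ico (hx : SeqOK x) (hn : 2 ≤ n) (hp : p ∈ Mpart x n) :
    treeDist p (Pp x 2) ∈ Set.Ico (expSum n - expSum 2) (expSum (n + 1) - expSum 2) := by
  have hfst : |p.1 - (Pp x 2).1| = expSum n - expSum 2 := by
    rw [fst_of_mem_Mpart hp, fst_of_mem_Mpart (Pp_mem_Mpart x 2),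
      abs_of_nonneg (sub_nonneg.2 (expSum_mono hn))]
  have hxn : exp (x n) ≤ exp n := exp_le_exp.2 (by exact_mod_cast (hx n hn).2)
  have hx2 : exp (x 2) ≤ exp n := exp_le_exp.2 (by exact_mod_cast (hx 2 le_rfl).2.trans hn)
  refine ⟨hfst ▸ abs_fst_sub_le_treeDist _ _, ?_⟩
  calc treeDist p (Pp x 2) ≤ exp (x n) + (expSum n - expSum 2) + exp (x 2) := by
        simpa only [hfst, abs_snd_of_mem_Mpart hp, abs_snd_of_mem_Mpart (Pp_mem_Mpart x 2)]
          using treeDist_le p (Pp x 2)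
    _ < expSum (n + 1) - expSum 2 := by
        rw [expSum_succ (n := n) (by omega)]
        linarith [two_mul_exp_lt_exp_succ_sq n]

lemma level_eq_of_treeDist_Pp_two_eq {y : ℕ → ℕ} (hx : SeqOK x) (hy : SeqOK y) {m : ℕ}
    (hm : 2 ≤ m) (hn : 2 ≤ n) {q : ℝ × ℝ} (hp : p ∈ Mpart x m) (hq : q ∈ Mpart y n)
    (h : treeDist p (Pp x 2) = treeDist q (Pp y 2)) : m = n := by
  by_contra hmn
  have hmono : Monotone fun k => expSum k - expSum 2 := fun _ _ hk =>
    sub_le_sub_right (expSum_mono hk) _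
  exact Set.disjoint_left.1 (hmono.pairwise_disjoint_on_Ico_succ hmn)
    (treeDist_Pp_two_mem_Ico hx hm hp) (h ▸ treeDist_Pp_two_mem_Ico hy hn hq)

lemma mapsTo_Mpart {y : ℕ → ℕ} (hx : SeqOK x) (hy : SeqOK y) {φ : ℝ × ℝ → ℝ × ℝ}
    (hmaps : Set.MapsTo φ (Mset x) (Mset y))
    (hiso : ∀ p ∈ Mset x, ∀ q ∈ Mset x, treeDist (φ p) (φ q) = treeDist p q)
    (hφ2 : φ (Pp x 2) = Pp y 2) (hn : 2 ≤ n) : Set.MapsTo φ (Mpart x n) (Mpart y n) := by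
  intro p hp
  have hpM := Mpart_subset_Mset hn hp
  obtain ⟨m, hm, hφp⟩ := mem_Mset.1 (hmaps hpM)
  have hd := hiso p hpM _ (Mpart_subset_Mset le_rfl (Pp_mem_Mpart x 2))
  rw [hφ2] at hd
  rwa [← level_eq_of_treeDist_Pp_two_eq hy hx hm hn hφp hp hd]

end Levels

/-- If there is a pointed bijective isometry `(M_x, P⁺_{x,2}) → (M_y, P⁺_{y,2})`,
then `x = y`. -/
theorem eq_of_pointed_isometry (x y : ℕ → ℕ) (hx : SeqOK x) (hy : SeqOK y)
    (φ : ℝ × ℝ → ℝ × ℝ) (hbij : Set.BijOn φ (Mset x) (Mset y))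
    (hiso : ∀ p ∈ Mset x, ∀ q ∈ Mset x, treeDist (φ p) (φ q) = treeDist p q)
    (hφ2 : φ (Pp x 2) = Pp y 2) :
    ∀ n, 2 ≤ n → x n = y n := by
  intro n hn
  have hmaps := mapsTo_Mpart hx hy hbij.mapsTo hiso hφ2 hn
  have hp := Mpart_subset_Mset hn (Pp_mem_Mpart x n)
  have hm := Mpart_subset_Mset hn (Pm_mem_Mpart x n)
  have hdist : 2 * exp (x n) = 2 * exp (y n) := by
    rw [← treeDist_Pp_Pm, ← hiso _ hp _ hm]
    exact treeDist_eq_of_mem_Mpart_of_ne (hmaps (Pp_mem_Mpart x n)) (hmaps (Pm_mem_Mpart x n))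
      (hbij.injOn.ne hp hm (Pp_ne_Pm x n))
  exact_mod_cast exp_injective (mul_left_cancel₀ two_ne_zero hdist)
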